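/- Fix an integer $b \ge 2$ and $\gamma > 0$. Let $(F_k)_{k \ge 0}$ be a sequence of functions from $[0,1]$ to $\mathbb{C}$, let $T_M = \{ i b^{-M} : 0 \le i \le b^M \}$, and suppose there is $n_1 \ge 1$ such that for all $n \ge n_1$: (a) for every $b$-adic interval $I_w$ of generation $n$ with endpoints $t_w, t_w + b^{-n}$ one has $\max_{0 \le k \le n} |F_k(t_w + b^{-n}) - F_k(t_w)| \le b^{-n\gamma}$, and (b) $\max_{t \in T_n} |F_n(t) - F_{n-1}(t)| \le b^{-n\gamma}$. Then, with $C_\gamma = 2b/(1 - b^{-\gamma})$, for all $t, s \in \bigcup_{M \ge 1} T_M$ with $|t - s| \le b^{-n_1}$ one has $\sup_{k \ge 1} |F_k(t) - F_k(s)| \le C_\gamma |t-s|^\gamma$. -/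

import Mathlib

open Filter

/-- The set `T_M = { i b^{-M} : 0 ≤ i ≤ b^M }` of `b`-adic points of generation `M`. -/
def badicPts (b M : ℕ) : Set ℝ :=
  {x : ℝ | ∃ i : ℕ, i ≤ b ^ M ∧ x = (i : ℝ) * ((b : ℝ) ^ M)⁻¹}

/-!
Write `r = b^{-γ}` and let `x_κ` be the left endpoint of the generation-`κ` cell containing `x`.
Following `κ ↦ F_{min k κ}(x_κ)` from `κ = n` to `κ = ∞` costs at most `b r^{κ+1}` per step:
hypothesis (a) moves `x_κ` to `x_{κ+1}` across fewer than `b` cells of generation `κ + 1`, and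
(b) switches `F_κ` to `F_{κ+1}` at the point `x_κ ∈ T_{κ+1}`. Summing gives `b r^{n+1}/(1 - r)`
for each of `t`, `s`. Choosing `n` with `b^{-n} ≤ |t - s| ≤ b^{1-n}`, the points `t_n` and `s_n` are
at most `b` cells apart, so (a) bounds their difference by `b r^n`, and altogether
`‖F_k t - F_k s‖ ≤ 2b r^n/(1 - r) ≤ C_γ |t - s|^γ`.
-/

open Finset

lemma badicPts_mono {b : ℕ} (hb : 0 < b) {M N : ℕ} (h : M ≤ N) :
    badicPts b M ⊆ badicPts b N := by
  obtain ⟨c, rfl⟩ := Nat.exists_eq_add_of_le h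
  rintro x ⟨i, hi, rfl⟩
  refine ⟨i * b ^ c, ?_, ?_⟩
  · rw [pow_add]
    exact Nat.mul_le_mul_right _ hi
  · have : (b : ℝ) ≠ 0 := by positivity
    push_cast
    rw [pow_add]
    field_simp

lemma badicPts_subset_Icc {b M : ℕ} : badicPts b M ⊆ Set.Icc 0 1 := by
  rintro _ ⟨i, hi, rfl⟩
  refine ⟨by positivity, ?_⟩
  calc (i : ℝ) * ((b : ℝ) ^ M)⁻¹ ≤ (b : ℝ) ^ M * ((b : ℝ) ^ M)⁻¹ := by
        gcongr
        exact_mod_cast hi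
    _ ≤ 1 := mul_inv_le_one

noncomputable def badicIndex (b κ : ℕ) (x : ℝ) : ℕ := ⌊x * (b : ℝ) ^ κ⌋₊

section badicIndex

variable {b κ : ℕ} {x y : ℝ}

lemma badicIndex_le_pow (hx : x ≤ 1) : badicIndex b κ x ≤ b ^ κ :=
  Nat.floor_le_of_le (by push_cast; exact mul_le_of_le_one_left (by positivity) hx)

lemma badicIndex_succ_div (hb : 0 < b) : badicIndex b (κ + 1) x / b = badicIndex b κ x := by
  have : (b : ℝ) ≠ 0 := by positivity
  rw [badicIndex, badicIndex, ← Nat.floor_div_natCast, pow_succ, ← mul_assoc,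
    mul_div_cancel_right₀ _ this]

lemma badicIndex_mono (hxy : x ≤ y) : badicIndex b κ x ≤ badicIndex b κ y :=
  Nat.floor_mono (by gcongr)

lemma badicIndex_le_add {c : ℕ} (hx : 0 ≤ x) (h : (y - x) * (b : ℝ) ^ κ ≤ c) :
    badicIndex b κ y ≤ badicIndex b κ x + c := by
  rw [badicIndex, badicIndex, ← Nat.floor_add_natCast (by positivity)]
  exact Nat.floor_mono (by linarith)

lemma badicIndex_mul_inv_of_mem {M : ℕ} (hb : 0 < b) (hx : x ∈ badicPts b M) (h : M ≤ κ) :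
    (badicIndex b κ x : ℝ) * ((b : ℝ) ^ κ)⁻¹ = x := by
  obtain ⟨j, -, rfl⟩ := badicPts_mono hb h hx
  have : (b : ℝ) ^ κ ≠ 0 := by positivity
  rw [badicIndex, inv_mul_cancel_right₀ this, Nat.floor_natCast]

end badicIndex

noncomputable def chainApprox {E : Type*} (F : ℕ → ℝ → E) (b k κ : ℕ) (x : ℝ) : E :=
  F (min k κ) (badicIndex b κ x * ((b : ℝ) ^ κ)⁻¹)

lemma chainApprox_of_mem {E : Type*} {F : ℕ → ℝ → E} {b k κ M : ℕ} {x : ℝ} (hb : 0 < b)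
    (hx : x ∈ badicPts b M) (hM : M ≤ κ) (hk : k ≤ κ) : chainApprox F b k κ x = F k x := by
  rw [chainApprox, min_eq_left hk, badicIndex_mul_inv_of_mem hb hx hM]

variable {E : Type*} [SeminormedAddCommGroup E]

lemma norm_sub_le_of_norm_succ_sub_le {u : ℕ → E} {ε : ℝ} {m n : ℕ} (hmn : m ≤ n)
    (h : ∀ i, m ≤ i → i < n → ‖u (i + 1) - u i‖ ≤ ε) : ‖u n - u m‖ ≤ (n - m : ℕ) * ε := by
  rw [← dist_eq_norm, dist_comm]
  calc dist (u m) (u n) ≤ ∑ _ ∈ Ico m n, ε :=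
        dist_le_Ico_sum_of_dist_le hmn fun hm hn => by
          rw [dist_comm, dist_eq_norm]
          exact h _ hm hn
    _ = (n - m : ℕ) * ε := by simp

lemma norm_sub_le_of_badic_increment_le {b g : ℕ} {ε : ℝ} {f : ℝ → E}
    (hinc : ∀ i < b ^ g, ‖f ((i + 1) * ((b : ℝ) ^ g)⁻¹) - f (i * ((b : ℝ) ^ g)⁻¹)‖ ≤ ε)
    {i i' : ℕ} (hii' : i ≤ i') (hi' : i' ≤ b ^ g) :
    ‖f (i' * ((b : ℝ) ^ g)⁻¹) - f (i * ((b : ℝ) ^ g)⁻¹)‖ ≤ (i' - i : ℕ) * ε :=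
  norm_sub_le_of_norm_succ_sub_le (u := fun j : ℕ => f (j * ((b : ℝ) ^ g)⁻¹)) hii'
    fun j _ hj => by simpa using hinc j (by omega)

lemma exists_badic_scale {b n₁ : ℕ} (hb : 1 < b) {d : ℝ} (hd₀ : 0 < d)
    (hd : d ≤ ((b : ℝ) ^ n₁)⁻¹) : ∃ n, n₁ ≤ n ∧ ((b : ℝ) ^ n)⁻¹ ≤ d ∧ d * (b : ℝ) ^ n ≤ b := by
  have hb' : (1 : ℝ) < b := by exact_mod_cast hb
  have hn₁ : (b : ℝ) ^ n₁ ≤ d⁻¹ := (le_inv_comm₀ hd₀ (by positivity)).1 hd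
  obtain ⟨m, hm, hm'⟩ := exists_nat_pow_near ((one_le_pow₀ hb'.le).trans hn₁) hb'
  refine ⟨m + 1, ((pow_lt_pow_iff_right₀ hb').1 (hn₁.trans_lt hm')).le,
    (inv_lt_of_inv_lt₀ hd₀ hm').le, ?_⟩
  have : d * (b : ℝ) ^ m ≤ 1 :=
    (mul_le_mul_of_nonneg_left hm hd₀.le).trans_eq (mul_inv_cancel₀ hd₀.ne')
  rw [pow_succ, ← mul_assoc]
  simpa using mul_le_mul_of_nonneg_right this (by positivity : (0 : ℝ) ≤ b)

/-- Hypotheses (a) and (b), with `r ^ n` in place of `b^{-nγ}`. -/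
structure BadicIncrementBound (b n₁ : ℕ) (r : ℝ) (F : ℕ → ℝ → E) : Prop where
  increment_le : ∀ n, n₁ ≤ n → ∀ i < b ^ n, ∀ k ≤ n,
    ‖F k ((i + 1) * ((b : ℝ) ^ n)⁻¹) - F k (i * ((b : ℝ) ^ n)⁻¹)‖ ≤ r ^ n
  succ_sub_le : ∀ n, n₁ ≤ n → ∀ t ∈ badicPts b n, ‖F n t - F (n - 1) t‖ ≤ r ^ n

namespace BadicIncrementBound

variable {b n₁ : ℕ} {r : ℝ} {F : ℕ → ℝ → E}

theorem norm_chainApprox_succ_sub_le (hF : BadicIncrementBound b n₁ r F) (hb : 0 < b)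
    (hr : 0 ≤ r) {κ : ℕ} (hκ : n₁ ≤ κ) {x : ℝ} (hx : x ≤ 1) (k : ℕ) :
    ‖chainApprox F b k (κ + 1) x - chainApprox F b k κ x‖ ≤ b * r ^ (κ + 1) := by
  have hdigit : b * badicIndex b κ x + badicIndex b (κ + 1) x % b = badicIndex b (κ + 1) x := by
    rw [← badicIndex_succ_div (κ := κ) (x := x) hb]
    exact Nat.div_add_mod _ _
  set j := badicIndex b κ x
  set j' := badicIndex b (κ + 1) x
  have hj' : j' ≤ b ^ (κ + 1) := badicIndex_le_pow hx
  have hcoarse : (j : ℝ) * ((b : ℝ) ^ κ)⁻¹ = ((b * j : ℕ) : ℝ) * ((b : ℝ) ^ (κ + 1))⁻¹ := by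
    have : (b : ℝ) ≠ 0 := by positivity
    push_cast
    rw [pow_succ]
    field_simp
  have hfine : ‖F (min k (κ + 1)) (j' * ((b : ℝ) ^ (κ + 1))⁻¹)
      - F (min k (κ + 1)) (j * ((b : ℝ) ^ κ)⁻¹)‖ ≤ (j' - b * j : ℕ) * r ^ (κ + 1) := by
    rw [hcoarse]
    exact norm_sub_le_of_badic_increment_le
      (fun i hi => hF.increment_le _ (by omega) i hi _ (min_le_right _ _)) (by omega) hj'
  have hswitch : ‖F (min k (κ + 1)) (j * ((b : ℝ) ^ κ)⁻¹)
      - F (min k κ) (j * ((b : ℝ) ^ κ)⁻¹)‖ ≤ r ^ (κ + 1) := by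
    rcases le_or_gt k κ with hk | hk
    · rw [min_eq_left hk, min_eq_left (hk.trans κ.le_succ), sub_self, norm_zero]
      positivity
    · rw [min_eq_right hk, min_eq_right hk.le]
      have hmem : (j : ℝ) * ((b : ℝ) ^ κ)⁻¹ ∈ badicPts b (κ + 1) :=
        ⟨b * j, by omega, hcoarse⟩
      simpa using hF.succ_sub_le (κ + 1) (by omega) _ hmem
  have hcount : ((j' - b * j : ℕ) : ℝ) + 1 ≤ b := by
    have := Nat.mod_lt j' hb
    exact_mod_cast (show j' - b * j + 1 ≤ b by omega)
  calc ‖chainApprox F b k (κ + 1) x - chainApprox F b k κ x‖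
      ≤ (j' - b * j : ℕ) * r ^ (κ + 1) + r ^ (κ + 1) :=
        (norm_sub_le_norm_sub_add_norm_sub _ _ _).trans (add_le_add hfine hswitch)
    _ ≤ b * r ^ (κ + 1) := by nlinarith [pow_nonneg hr (κ + 1)]

theorem norm_chainApprox_sub_le (hF : BadicIncrementBound b n₁ r F) (hb : 0 < b)
    (hr₀ : 0 ≤ r) (hr₁ : r < 1) {n N : ℕ} (hn : n₁ ≤ n) (hnN : n ≤ N) {x : ℝ} (hx : x ≤ 1)
    (k : ℕ) :
    ‖chainApprox F b k N x - chainApprox F b k n x‖ ≤ b * r ^ (n + 1) / (1 - r) := by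
  rw [← dist_eq_norm, dist_comm]
  calc dist (chainApprox F b k n x) (chainApprox F b k N x)
      ≤ ∑ κ ∈ Ico n N, b * r ^ (κ + 1) :=
        dist_le_Ico_sum_of_dist_le (f := fun κ => chainApprox F b k κ x) hnN fun hκ _ => by
          rw [dist_comm, dist_eq_norm]
          exact hF.norm_chainApprox_succ_sub_le hb hr₀ (hn.trans hκ) hx k
    _ = b * r * ∑ κ ∈ Ico n N, r ^ κ := by
        rw [mul_sum]
        exact sum_congr rfl fun κ _ => by ring
    _ ≤ b * r * (r ^ n / (1 - r)) := by
        gcongr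
        exact geom_sum_Ico_le_of_lt_one hr₀ hr₁
    _ = b * r ^ (n + 1) / (1 - r) := by ring

theorem norm_sub_le_of_scale (hF : BadicIncrementBound b n₁ r F) (hb : 0 < b)
    (hr₀ : 0 ≤ r) (hr₁ : r < 1) {M n : ℕ} {t s : ℝ} (ht : t ∈ badicPts b M)
    (hs : s ∈ badicPts b M) (hst : s ≤ t) (hn : n₁ ≤ n) (hscale : (t - s) * (b : ℝ) ^ n ≤ b)
    (k : ℕ) :
    ‖F k t - F k s‖ ≤ 2 * b / (1 - r) * r ^ n := by
  have ht₁ := (badicPts_subset_Icc ht).2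
  have hs₁ := (badicPts_subset_Icc hs).2
  set N := max (max k M) n
  have hkN : k ≤ N := (le_max_left _ _).trans (le_max_left _ _)
  have hMN : M ≤ N := (le_max_right _ _).trans (le_max_left _ _)
  rw [← chainApprox_of_mem (F := F) hb ht hMN hkN, ← chainApprox_of_mem (F := F) hb hs hMN hkN]
  have hmid : ‖chainApprox F b k n t - chainApprox F b k n s‖ ≤ b * r ^ n := by
    have hcount := badicIndex_le_add (κ := n) (badicPts_subset_Icc hs).1 hscale
    refine (norm_sub_le_of_badic_increment_le
      (fun i hi => hF.increment_le _ hn i hi _ (min_le_right _ _))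
      (badicIndex_mono hst) (badicIndex_le_pow ht₁)).trans ?_
    gcongr
    exact_mod_cast (show _ ≤ b by omega)
  have hchain (x : ℝ) (hx : x ≤ 1) :
      ‖chainApprox F b k N x - chainApprox F b k n x‖ ≤ b * r ^ (n + 1) / (1 - r) :=
    hF.norm_chainApprox_sub_le hb hr₀ hr₁ hn (le_max_right _ _) hx k
  have hgeom : b * r ^ (n + 1) / (1 - r) + b * r ^ n + b * r ^ (n + 1) / (1 - r)
      ≤ 2 * b / (1 - r) * r ^ n := by
    have h1r : 0 < 1 - r := by linarith
    rw [← sub_nonneg]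
    have : 2 * b / (1 - r) * r ^ n - (b * r ^ (n + 1) / (1 - r) + b * r ^ n
        + b * r ^ (n + 1) / (1 - r)) = b * r ^ n := by
      field_simp
      ring
    rw [this]
    positivity
  calc ‖chainApprox F b k N t - chainApprox F b k N s‖
      ≤ ‖chainApprox F b k N t - chainApprox F b k n t‖
        + ‖chainApprox F b k n t - chainApprox F b k n s‖
        + ‖chainApprox F b k n s - chainApprox F b k N s‖ := by
        simpa only [dist_eq_norm] using dist_triangle4 (chainApprox F b k N t)
          (chainApprox F b k n t) (chainApprox F b k n s) (chainApprox F b k N s)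
    _ ≤ b * r ^ (n + 1) / (1 - r) + b * r ^ n + b * r ^ (n + 1) / (1 - r) := by
        rw [norm_sub_rev (chainApprox F b k n s)]
        gcongr
        exacts [hchain t ht₁, hchain s hs₁]
    _ ≤ 2 * b / (1 - r) * r ^ n := hgeom

theorem norm_sub_le_mul_rpow {γ : ℝ} (hF : BadicIncrementBound b n₁ ((b : ℝ) ^ (-γ)) F)
    (hb : 1 < b) (hγ : 0 < γ) {M : ℕ} {t s : ℝ} (ht : t ∈ badicPts b M) (hs : s ∈ badicPts b M)
    (hst : s ≤ t) (hclose : t - s ≤ ((b : ℝ) ^ n₁)⁻¹) (k : ℕ) :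
    ‖F k t - F k s‖ ≤ 2 * b / (1 - (b : ℝ) ^ (-γ)) * (t - s) ^ γ := by
  rcases hst.eq_or_lt with rfl | hlt
  · simp [Real.zero_rpow hγ.ne']
  obtain ⟨n, hn, hlow, hscale⟩ := exists_badic_scale (by omega) (sub_pos.2 hlt) hclose
  have hb₀ : (0 : ℝ) ≤ b := by positivity
  have hr₁ : (b : ℝ) ^ (-γ) < 1 :=
    Real.rpow_lt_one_of_one_lt_of_neg (by exact_mod_cast hb) (neg_neg_of_pos hγ)
  have hpow : ((b : ℝ) ^ (-γ)) ^ n ≤ (t - s) ^ γ :=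
    calc ((b : ℝ) ^ (-γ)) ^ n = (((b : ℝ) ^ n)⁻¹) ^ γ := by
          rw [← Real.rpow_mul_natCast hb₀, Real.inv_rpow (by positivity),
            ← Real.rpow_natCast_mul hb₀, ← Real.rpow_neg hb₀, neg_mul, mul_comm]
      _ ≤ (t - s) ^ γ := Real.rpow_le_rpow (by positivity) hlow hγ.le
  refine (hF.norm_sub_le_of_scale (by omega) (by positivity) hr₁ ht hs hst hn hscale k).trans ?_
  exact mul_le_mul_of_nonneg_left hpow (div_nonneg (by positivity) (sub_nonneg.2 hr₁.le))

end BadicIncrementBound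

theorem stmt_4_general (b : ℕ) (hb : 2 ≤ b) (γ : ℝ) (hγ : 0 < γ)
    (F : ℕ → ℝ → ℂ) (n₁ : ℕ)
    (ha : ∀ n : ℕ, n₁ ≤ n → ∀ i : ℕ, i < b ^ n → ∀ k : ℕ, k ≤ n →
      ‖F k (((i : ℝ) + 1) * ((b : ℝ) ^ n)⁻¹) - F k ((i : ℝ) * ((b : ℝ) ^ n)⁻¹)‖ ≤
        (b : ℝ) ^ (-(n : ℝ) * γ))
    (hbnd : ∀ n : ℕ, n₁ ≤ n → ∀ t ∈ badicPts b n,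
      ‖F n t - F (n - 1) t‖ ≤ (b : ℝ) ^ (-(n : ℝ) * γ)) :
    ∀ t ∈ ⋃ M ≥ 1, badicPts b M, ∀ s ∈ ⋃ M ≥ 1, badicPts b M,
      |t - s| ≤ ((b : ℝ) ^ n₁)⁻¹ →
      ∀ k : ℕ, 1 ≤ k →
        ‖F k t - F k s‖ ≤ 2 * b / (1 - (b : ℝ) ^ (-γ)) * |t - s| ^ γ := by
  intro t ht s hs hclose k _
  obtain ⟨Mt, -, ht⟩ := Set.mem_iUnion₂.1 ht
  obtain ⟨Ms, -, hs⟩ := Set.mem_iUnion₂.1 hs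
  have ht' := badicPts_mono (by omega) (le_max_left Mt Ms) ht
  have hs' := badicPts_mono (by omega) (le_max_right Mt Ms) hs
  have hr (n : ℕ) : (b : ℝ) ^ (-(n : ℝ) * γ) = ((b : ℝ) ^ (-γ)) ^ n := by
    rw [← Real.rpow_mul_natCast (by positivity), neg_mul, neg_mul, mul_comm]
  have hF : BadicIncrementBound b n₁ ((b : ℝ) ^ (-γ)) F :=
    ⟨fun n hn i hi k hk => (ha n hn i hi k hk).trans_eq (hr n),
      fun n hn t ht => (hbnd n hn t ht).trans_eq (hr n)⟩
  rcases le_total s t with hst | hts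
  · rw [abs_of_nonneg (sub_nonneg.2 hst)] at hclose ⊢
    exact hF.norm_sub_le_mul_rpow (by omega) hγ ht' hs' hst hclose k
  · rw [abs_sub_comm, abs_of_nonneg (sub_nonneg.2 hts)] at hclose ⊢
    rw [norm_sub_rev]
    exact hF.norm_sub_le_mul_rpow (by omega) hγ hs' ht' hts hclose k

/-- Deterministic chaining lemma: if for all `n ≥ n₁` the increments of all `F_k`, `k ≤ n`,
over `b`-adic intervals of generation `n` are bounded by `b^{-nγ}`, and
`max_{t ∈ T_n} |F_n(t) - F_{n-1}(t)| ≤ b^{-nγ}`, then for `b`-adic `t, s` with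
`|t - s| ≤ b^{-n₁}` one has `sup_{k ≥ 1} |F_k(t) - F_k(s)| ≤ C_γ |t-s|^γ`
with `C_γ = 2b/(1 - b^{-γ})`. -/
theorem stmt_4 (b : ℕ) (hb : 2 ≤ b) (γ : ℝ) (hγ : 0 < γ)
    (F : ℕ → ℝ → ℂ) (n₁ : ℕ) (hn₁ : 1 ≤ n₁)
    (ha : ∀ n : ℕ, n₁ ≤ n → ∀ i : ℕ, i < b ^ n → ∀ k : ℕ, k ≤ n →
      ‖F k (((i : ℝ) + 1) * ((b : ℝ) ^ n)⁻¹) - F k ((i : ℝ) * ((b : ℝ) ^ n)⁻¹)‖ ≤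
        (b : ℝ) ^ (-(n : ℝ) * γ))
    (hbnd : ∀ n : ℕ, n₁ ≤ n → ∀ t ∈ badicPts b n,
      ‖F n t - F (n - 1) t‖ ≤ (b : ℝ) ^ (-(n : ℝ) * γ)) :
    ∀ t ∈ ⋃ M ≥ 1, badicPts b M, ∀ s ∈ ⋃ M ≥ 1, badicPts b M,
      |t - s| ≤ ((b : ℝ) ^ n₁)⁻¹ →
      ∀ k : ℕ, 1 ≤ k →
        ‖F k t - F k s‖ ≤ 2 * b / (1 - (b : ℝ) ^ (-γ)) * |t - s| ^ γ :=
  stmt_4_general b hb γ hγ F n₁ ha hbnd
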